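/- The point E₄ = ((rflK - rfμ - τlKb)/(rfq), τ/f, 0, K(rf - bτ)/(rf)) is an equilibrium of the logistic ecoepidemic system, and its coordinates are all nonnegative if rf(lK - μ) ≥ bKlτ. -/

import Mathlib

open Polynomial

noncomputable def logisticRHS (g f τ l β q μ c ν r b K : ℝ) (x : Fin 4 → ℝ) : Fin 4 → ℝ :=
  ![x 0 * (g * x 2 + f * x 1 - τ),
    x 1 * (l * x 3 - β * x 2 - q * x 0 - μ),
    x 2 * (β * x 1 - c * x 0 - ν),
    x 3 * (r * (1 - x 3 / K) - b * x 1)]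

noncomputable def logisticJac (g f τ l β q μ c ν r b K : ℝ) (x : Fin 4 → ℝ) :
    Matrix (Fin 4) (Fin 4) ℝ :=
  Matrix.of ![
    ![g * x 2 + f * x 1 - τ, f * x 0, g * x 0, 0],
    ![-(q * x 1), l * x 3 - β * x 2 - q * x 0 - μ, -(β * x 1), l * x 1],
    ![-(c * x 2), β * x 2, β * x 1 - c * x 0 - ν, 0],
    ![0, -(b * x 3), 0, r * (1 - x 3 / K) - b * x 1 - r * x 3 / K]]

/-!
At `E₄` the infected class is absent, `S = τ / f` is the level at which the predators neither grow
nor decline, `V` is then fixed by the logistic equation with grazing pressure `b S`, and `P` is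
chosen so that the susceptible growth rate `l V - q P - μ` vanishes. Nonnegativity of `P` is the
hypothesis itself, and it also forces `b τ < r f`, i.e. `V > 0`.
-/

noncomputable def logisticE4 (f τ l q μ r b K : ℝ) : Fin 4 → ℝ :=
  ![(r * f * l * K - r * f * μ - τ * l * K * b) / (r * f * q), τ / f, 0,
    K * (r * f - b * τ) / (r * f)]

theorem logisticRHS_eq_zero_iff (g f τ l β q μ c ν r b K : ℝ) (x : Fin 4 → ℝ) :
    logisticRHS g f τ l β q μ c ν r b K x = 0 ↔
      (x 0 = 0 ∨ g * x 2 + f * x 1 - τ = 0) ∧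
      (x 1 = 0 ∨ l * x 3 - β * x 2 - q * x 0 - μ = 0) ∧
      (x 2 = 0 ∨ β * x 1 - c * x 0 - ν = 0) ∧
      (x 3 = 0 ∨ r * (1 - x 3 / K) - b * x 1 = 0) := by
  simp [logisticRHS, funext_iff, Fin.forall_fin_succ]

theorem logisticRHS_logisticE4 (g f τ l β q μ c ν r b K : ℝ)
    (hf : f ≠ 0) (hq : q ≠ 0) (hr : r ≠ 0) (hK : K ≠ 0) :
    logisticRHS g f τ l β q μ c ν r b K (logisticE4 f τ l q μ r b K) = 0 := by
  refine (logisticRHS_eq_zero_iff ..).2 ⟨.inr ?_, .inr ?_, .inl rfl, .inr ?_⟩ <;>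
    simp only [logisticE4, Matrix.cons_val] <;> field_simp <;> ring

theorem b_mul_τ_lt_r_mul_f {f τ l μ r b K : ℝ}
    (hf : 0 < f) (hμ : 0 < μ) (hr : 0 < r) (hl : 0 < l) (hK : 0 < K)
    (h : b * K * l * τ ≤ r * f * (l * K - μ)) : b * τ < r * f := by
  have hmargin : r * f * μ ≤ l * K * (r * f - b * τ) := by linarith
  have hprod : 0 < l * K * (r * f - b * τ) := hmargin.trans_lt' (by positivity)
  linarith [pos_of_mul_pos_right hprod (by positivity : (0 : ℝ) ≤ l * K)]

theorem stmt13_general (g f τ l β q μ c ν r b K : ℝ)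
    (hf : 0 < f) (hτ : 0 < τ) (hl : 0 < l)
    (hq : 0 < q) (hμ : 0 < μ) (hr : 0 < r)
    (hK : 0 < K) :
    logisticRHS g f τ l β q μ c ν r b K
      ![(r * f * l * K - r * f * μ - τ * l * K * b) / (r * f * q), τ / f, 0,
        K * (r * f - b * τ) / (r * f)] = 0 ∧
    (b * K * l * τ ≤ r * f * (l * K - μ) →
      0 ≤ (r * f * l * K - r * f * μ - τ * l * K * b) / (r * f * q) ∧
      0 ≤ τ / f ∧ (0:ℝ) ≤ 0 ∧ 0 ≤ K * (r * f - b * τ) / (r * f)) := by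
  refine ⟨logisticRHS_logisticE4 g f τ l β q μ c ν r b K hf.ne' hq.ne' hr.ne' hK.ne',
    fun h => ⟨div_nonneg ?_ (by positivity), by positivity, le_rfl, div_nonneg ?_ (by positivity)⟩⟩
  · linarith
  · exact mul_nonneg hK.le (sub_nonneg.2 (b_mul_τ_lt_r_mul_f hf hμ hr hl hK h).le)

theorem stmt13 (g f τ l β q μ c ν r b K : ℝ)
    (hg : 0 < g) (hf : 0 < f) (hτ : 0 < τ) (hl : 0 < l) (hβ : 0 < β)
    (hq : 0 < q) (hμ : 0 < μ) (hc : 0 < c) (hν : 0 < ν) (hr : 0 < r) (hb : 0 < b)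
    (hK : 0 < K) :
    logisticRHS g f τ l β q μ c ν r b K
      ![(r * f * l * K - r * f * μ - τ * l * K * b) / (r * f * q), τ / f, 0,
        K * (r * f - b * τ) / (r * f)] = 0 ∧
    (b * K * l * τ ≤ r * f * (l * K - μ) →
      0 ≤ (r * f * l * K - r * f * μ - τ * l * K * b) / (r * f * q) ∧
      0 ≤ τ / f ∧ (0:ℝ) ≤ 0 ∧ 0 ≤ K * (r * f - b * τ) / (r * f)) :=
  stmt13_general g f τ l β q μ c ν r b K hf hτ hl hq hμ hr hK
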